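/- arXiv:1501.06556 — 2 statements merged into one kernel-verified Lean document; each statement's English description precedes it below -/
import Mathlib

section
/- (Mean-value Poincaré inequality.) Let (Ω,d,μ) be a metric measure space with μ(Ω) < ∞ whose isoperimetric profile I is concave, continuous, I(0) = 0, strictly positive on (0, μ(Ω)), symmetric about μ(Ω)/2, and increasing on (0, μ(Ω)/2]. Let f : Ω → ℝ be Lipschitz and integrable with |∇f| integrable, and assume the co-area inequality for f: ∫_{−∞}^{∞} I(μ{f > s}) ds ≤ ∫_Ω |∇f| dμ. Then ∫_Ω |f − (1/μ(Ω))∫_Ω f dμ| dμ ≤ [μ(Ω)/I(μ(Ω)/2)] · ∫_Ω |∇f| dμ. -/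
open MeasureTheory Filter Set Topology
open scoped ENNReal NNReal

/-- The modulus of the gradient of `f` at `x`:
`|∇f|(x) = limsup_{y→x} |f(x) - f(y)| / d(x,y)`. -/
noncomputable def gradMod {Ω : Type*} [MetricSpace Ω] (f : Ω → ℝ) (x : Ω) : ℝ :=
  Filter.limsup (fun y => |f x - f y| / dist x y) (𝓝[≠] x)

/-- The Minkowski content (perimeter) of a set `A`:
`μ⁺(A) = liminf_{h→0⁺} (μ(A_h) - μ(A))/h`, where `A_h` is the open `h`-thickening of `A`. -/
noncomputable def minkContent {Ω : Type*} [MetricSpace Ω] [MeasurableSpace Ω]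
    (μ : Measure Ω) (A : Set Ω) : ℝ≥0∞ :=
  Filter.liminf (fun h : ℝ => (μ (Metric.thickening h A) - μ A) / ENNReal.ofReal h)
    (𝓝[>] (0 : ℝ))

/-- The isoperimetric profile of `(Ω,d,μ)`:
`I(t) = inf {μ⁺(A) : A Borel, μ(A) = t}`. -/
noncomputable def isoProfile {Ω : Type*} [MetricSpace Ω] [MeasurableSpace Ω]
    (μ : Measure Ω) (t : ℝ≥0∞) : ℝ≥0∞ :=
  ⨅ (A : Set Ω) (_ : MeasurableSet A) (_ : μ A = t), minkContent μ A

/-- `m` is a median of `f` with respect to `μ`. -/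
def IsMedian {Ω : Type*} [MeasurableSpace Ω] (μ : Measure Ω) (f : Ω → ℝ) (m : ℝ) : Prop :=
  μ Set.univ / 2 ≤ μ {x | m ≤ f x} ∧ μ Set.univ / 2 ≤ μ {x | f x ≤ m}

/-!
Let `m` be a median of `f` and `M = μ(Ω)`. By the layer-cake formula,
`∫ |f - m| = ∫_{s > m} μ{f > s} ds + ∫_{s < m} μ{f < s} ds`, and the median property makes each
integrand at most `min (μ{f > s}) (μ{f ≤ s})`. A concave profile vanishing at `0` and symmetric
about `M/2` dominates the tent `(2 I(M/2) / M) · min(t, M - t)`, so the co-area inequality gives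
`(2 I(M/2) / M) ∫ |f - m| ≤ ∫ |∇f|`. Passing from the median to the mean costs a factor `2`,
since `M |m - ⨍ f| = |∫ (f - m)| ≤ ∫ |f - m|`.
-/

lemma gradMod_nonneg {Ω : Type*} [MetricSpace Ω] {K : ℝ≥0} {f : Ω → ℝ}
    (hf : LipschitzWith K f) (x : Ω) : 0 ≤ gradMod f x := by
  rcases (𝓝[≠] x).eq_or_neBot with h | h
  · -- at an isolated point the `limsup` is over `⊥`, where it takes the junk value `0`
    simp [gradMod, h, limsup_eq]
  · refine le_limsup_of_frequently_le (.of_forall fun y => by positivity) ?_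
    refine isBoundedUnder_of ⟨K, fun y => div_le_of_le_mul₀ dist_nonneg K.2 ?_⟩
    simpa [Real.dist_eq] using hf.dist_le_mul x y

lemma ConcaveOn.div_mul_le {s : Set ℝ} {I : ℝ → ℝ} (hI : ConcaveOn ℝ s I) (h0 : 0 ∈ s)
    (hI0 : I 0 = 0) {a t : ℝ} (ha : a ∈ s) (ht : 0 ≤ t) (hta : t ≤ a) : I a / a * t ≤ I t := by
  rcases ht.eq_or_lt with rfl | ht
  · simp [hI0]
  have hapos : 0 < a := ht.trans_le hta
  have := hI.2 ha h0 (div_nonneg ht.le hapos.le) (sub_nonneg.2 ((div_le_one hapos).2 hta))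
    (add_sub_cancel _ _)
  simp only [smul_eq_mul, mul_zero, add_zero, hI0, div_mul_cancel₀ t hapos.ne'] at this
  linarith [div_mul_comm (I a) a t]

lemma ConcaveOn.mul_min_le_of_symm {M : ℝ} {I : ℝ → ℝ} (hI : ConcaveOn ℝ (Icc 0 M) I)
    (hI0 : I 0 = 0) (hsym : ∀ t ∈ Icc 0 M, I (M - t) = I t) {t : ℝ} (ht : t ∈ Icc 0 M) :
    2 * I (M / 2) / M * min t (M - t) ≤ I t := by
  have hM : 0 ≤ M := ht.1.trans ht.2
  have hmin : I (min t (M - t)) = I t := by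
    rcases min_cases t (M - t) with ⟨h, -⟩ | ⟨h, -⟩ <;> simp [h, hsym t ht]
  rw [← hmin, show 2 * I (M / 2) / M = I (M / 2) / (M / 2) by field_simp]
  refine hI.div_mul_le ⟨le_rfl, hM⟩ hI0 ⟨by positivity, by linarith⟩
    (le_min ht.1 (by linarith [ht.2])) ?_
  exact min_le_iff.2 ((le_total t (M / 2)).imp_right fun h => by linarith)

lemma setLIntegral_Ioi_zero_comp_const_add (φ : ℝ → ℝ≥0∞) (a : ℝ) :
    ∫⁻ t in Ioi 0, φ (a + t) = ∫⁻ s in Ioi a, φ s := by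
  rw [(measurePreserving_add_left volume a).setLIntegral_comp_emb (measurableEmbedding_addLeft a),
    image_const_add_Ioi, add_zero]

lemma setLIntegral_Ioi_zero_comp_const_sub (φ : ℝ → ℝ≥0∞) (a : ℝ) :
    ∫⁻ t in Ioi 0, φ (a - t) = ∫⁻ s in Iio a, φ s := by
  rw [(volume.measurePreserving_sub_left a).setLIntegral_comp_emb
    (MeasurableEquiv.subLeft a).measurableEmbedding, image_const_sub_Ioi, sub_zero]

section Levels

variable {Ω : Type*} [MeasurableSpace Ω] {μ : Measure Ω} {f : Ω → ℝ}

lemma lintegral_ofReal_abs_sub_eq (hf : Measurable f) (a : ℝ) :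
    ∫⁻ x, ENNReal.ofReal |f x - a| ∂μ =
      (∫⁻ s in Ioi a, μ {x | s < f x}) + ∫⁻ s in Iio a, μ {x | f x < s} := by
  have hsplit : ∀ t ∈ Ioi (0 : ℝ),
      μ {x | t < |f x - a|} = μ {x | a + t < f x} + μ {x | f x < a - t} := by
    intro t (ht : 0 < t)
    have hdisj : Disjoint {x | a + t < f x} {x | f x < a - t} :=
      disjoint_left.2 fun x (h₁ : a + t < f x) (h₂ : f x < a - t) => by linarith
    rw [← measure_union hdisj (measurableSet_lt hf measurable_const)]
    congr 1
    ext x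
    simp only [mem_ofPred_eq, mem_union, lt_abs]
    constructor <;> rintro (h | h)
    exacts [.inl (by linarith), .inr (by linarith), .inl (by linarith), .inr (by linarith)]
  have hanti : Antitone fun t => μ {x | a + t < f x} :=
    fun s t hst => measure_mono fun x (hx : a + t < f x) => by simp only [mem_ofPred_eq]; linarith
  rw [lintegral_eq_lintegral_meas_lt μ (.of_forall fun x => abs_nonneg _)
      (hf.sub_const a).abs.aemeasurable, setLIntegral_congr_fun measurableSet_Ioi hsplit,
    lintegral_add_left hanti.measurable,
    setLIntegral_Ioi_zero_comp_const_add (fun s => μ {x | s < f x}),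
    setLIntegral_Ioi_zero_comp_const_sub (fun s => μ {x | f x < s})]

lemma isClosed_setOf_le_measure_le [IsFiniteMeasure μ] (hf : Measurable f) (c : ℝ≥0∞) :
    IsClosed {r : ℝ | c ≤ μ {x | f x ≤ r}} := by
  refine isClosed_of_closure_subset fun a ha => ?_
  have hlim := tendsto_measure_biInter_gt (μ := μ) (s := fun r : ℝ => {x | f x ≤ r}) (a := a)
    (fun r _ => (hf measurableSet_Iic).nullMeasurableSet)
    (fun i j _ hij x (hx : f x ≤ i) => hx.trans hij) ⟨a + 1, by linarith, measure_ne_top _ _⟩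
  have hinter : ⋂ r > a, {x | f x ≤ r} = {x | f x ≤ a} := by
    ext x
    simpa using ⟨le_of_forall_gt_imp_ge_of_dense, fun h r hr => h.trans hr.le⟩
  rw [hinter] at hlim
  refine ge_of_tendsto hlim (eventually_nhdsWithin_of_forall fun r (hr : a < r) => ?_)
  obtain ⟨s, hsr, hs⟩ := mem_closure_iff_nhds.1 ha (Iio r) (Iio_mem_nhds hr)
  exact hs.trans (measure_mono fun x (hx : f x ≤ s) => hx.trans (le_of_lt hsr))

lemma exists_half_measure_le_measure_setOf_le [IsFiniteMeasure μ] :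
    ∃ r : ℝ, μ univ / 2 ≤ μ {x | f x ≤ r} := by
  rcases eq_or_ne (μ univ) 0 with h | h
  · exact ⟨0, by simp [h]⟩
  have hlim := tendsto_measure_iUnion_atTop (μ := μ) (s := fun r : ℝ => {x | f x ≤ r})
    (fun i j hij x (hx : f x ≤ i) => hx.trans hij)
  rw [iUnion_eq_univ_iff.2 fun x => ⟨f x, le_refl (f x)⟩] at hlim
  exact (hlim.eventually (eventually_ge_nhds (ENNReal.half_lt_self h (measure_ne_top _ _)))).exists

/-- The sets `{r | μ(Ω)/2 ≤ μ{f ≤ r}}` and `{r | μ(Ω)/2 ≤ μ{r ≤ f}}` are closed, nonempty and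
cover `ℝ`, so by connectedness they meet. -/
lemma exists_isMedian [IsFiniteMeasure μ] (hf : Measurable f) : ∃ m, IsMedian μ f m := by
  set S := {r : ℝ | μ univ / 2 ≤ μ {x | f x ≤ r}}
  set T := {r : ℝ | μ univ / 2 ≤ μ {x | r ≤ f x}}
  have hT : T = Neg.neg ⁻¹' {r : ℝ | μ univ / 2 ≤ μ {x | -f x ≤ r}} := by
    ext r; simp [T, neg_le]
  have hcover : univ ⊆ S ∪ T := by
    intro r _
    by_contra! h
    simp only [mem_union, not_or, S, T, mem_ofPred_eq, not_le] at h
    have hle : μ univ ≤ μ {x | f x ≤ r} + μ {x | r ≤ f x} :=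
      (measure_mono fun x _ => le_total (f x) r).trans (measure_union_le _ _)
    exact (hle.trans_lt (ENNReal.add_lt_add h.1 h.2)).ne (ENNReal.add_halves _).symm
  obtain ⟨r, hr⟩ := exists_half_measure_le_measure_setOf_le (μ := μ) (f := f)
  obtain ⟨r', hr'⟩ := exists_half_measure_le_measure_setOf_le (μ := μ) (f := -f)
  obtain ⟨m, -, hmS, hmT⟩ := isPreconnected_closed_iff.1 isPreconnected_univ S T
    (isClosed_setOf_le_measure_le hf _)
    (hT ▸ (isClosed_setOf_le_measure_le hf.neg _).preimage continuous_neg) hcover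
    ⟨r, trivial, hr⟩ ⟨-r', trivial, by simpa [T, neg_le] using hr'⟩
  exact ⟨m, hmT, hmS⟩

lemma measure_compl_le_of_half_le [IsFiniteMeasure μ] {A : Set Ω} (hA : MeasurableSet A)
    (h : μ univ / 2 ≤ μ A) : μ Aᶜ ≤ μ A :=
  calc μ Aᶜ = μ univ - μ A := measure_compl hA (measure_ne_top _ _)
    _ ≤ μ univ - μ univ / 2 := tsub_le_tsub_left h _
    _ = μ univ / 2 := ENNReal.sub_half (measure_ne_top _ _)
    _ ≤ μ A := h

lemma IsMedian.measure_gt_le [IsFiniteMeasure μ] {m : ℝ} (h : IsMedian μ f m)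
    (hf : Measurable f) : μ {x | m < f x} ≤ μ {x | f x ≤ m} := by
  convert measure_compl_le_of_half_le (measurableSet_le hf measurable_const) h.2 using 2
  ext; simp

lemma IsMedian.measure_lt_le [IsFiniteMeasure μ] {m : ℝ} (h : IsMedian μ f m)
    (hf : Measurable f) : μ {x | f x < m} ≤ μ {x | m ≤ f x} := by
  convert measure_compl_le_of_half_le (measurableSet_le measurable_const hf) h.1 using 2
  ext; simp

lemma IsMedian.lintegral_ofReal_abs_sub_le [IsFiniteMeasure μ] {m : ℝ} (hm : IsMedian μ f m)
    (hf : Measurable f) :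
    ∫⁻ x, ENNReal.ofReal |f x - m| ∂μ ≤ ∫⁻ s, min (μ {x | s < f x}) (μ {x | f x ≤ s}) := by
  have habove : ∀ s ∈ Ioi m, μ {x | s < f x} ≤ min (μ {x | s < f x}) (μ {x | f x ≤ s}) :=
    fun s (hs : m < s) => le_min le_rfl <|
      calc μ {x | s < f x} ≤ μ {x | m < f x} := measure_mono fun x (hx : s < f x) => hs.trans hx
        _ ≤ μ {x | f x ≤ m} := hm.measure_gt_le hf
        _ ≤ μ {x | f x ≤ s} := measure_mono fun x (hx : f x ≤ m) => hx.trans hs.le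
  have hbelow : ∀ s ∈ Iio m, μ {x | f x < s} ≤ min (μ {x | s < f x}) (μ {x | f x ≤ s}) :=
    fun s (hs : s < m) => le_min
      (calc μ {x | f x < s} ≤ μ {x | f x < m} := measure_mono fun x (hx : f x < s) => hx.trans hs
        _ ≤ μ {x | m ≤ f x} := hm.measure_lt_le hf
        _ ≤ μ {x | s < f x} := measure_mono fun x (hx : m ≤ f x) => hs.trans_le hx)
      (measure_mono fun x (hx : f x < s) => le_of_lt hx)
  rw [lintegral_ofReal_abs_sub_eq hf]
  calc _ ≤ (∫⁻ s in Ioi m, min (μ {x | s < f x}) (μ {x | f x ≤ s})) +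
        ∫⁻ s in Iio m, min (μ {x | s < f x}) (μ {x | f x ≤ s}) :=
      add_le_add (setLIntegral_mono' measurableSet_Ioi habove)
        (setLIntegral_mono' measurableSet_Iio hbelow)
    _ = ∫⁻ s in Ioi m ∪ Iio m, min (μ {x | s < f x}) (μ {x | f x ≤ s}) :=
      (lintegral_union measurableSet_Iio (disjoint_left.2 fun _ h₁ h₂ => lt_asymm h₁ h₂)).symm
    _ ≤ _ := setLIntegral_le_lintegral _ _

lemma ConcaveOn.ofReal_mul_min_measure_compl_le [IsFiniteMeasure μ] {I : ℝ → ℝ}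
    (hI : ConcaveOn ℝ (Icc 0 (μ univ).toReal) I) (hI0 : I 0 = 0)
    (hsym : ∀ t ∈ Icc 0 (μ univ).toReal, I ((μ univ).toReal - t) = I t)
    {A : Set Ω} (hA : MeasurableSet A) :
    ENNReal.ofReal (2 * I ((μ univ).toReal / 2) / (μ univ).toReal) * min (μ A) (μ Aᶜ) ≤
      ENNReal.ofReal (I (μ A).toReal) := by
  have hle : (μ A).toReal ≤ (μ univ).toReal :=
    ENNReal.toReal_mono (measure_ne_top _ _) (measure_mono (subset_univ _))
  have hcompl : (μ Aᶜ).toReal = (μ univ).toReal - (μ A).toReal := by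
    rw [eq_sub_iff_add_eq', ← ENNReal.toReal_add (measure_ne_top _ _) (measure_ne_top _ _),
      measure_add_measure_compl hA]
  rw [← ENNReal.ofReal_toReal ((min_le_left _ _).trans_lt (measure_lt_top μ _)).ne,
    ENNReal.toReal_min (measure_ne_top _ _) (measure_ne_top _ _), hcompl,
    ← ENNReal.ofReal_mul' (le_min ENNReal.toReal_nonneg (sub_nonneg.2 hle))]
  exact ENNReal.ofReal_le_ofReal <| hI.mul_min_le_of_symm hI0 hsym ⟨ENNReal.toReal_nonneg, hle⟩

lemma IsMedian.mul_integral_abs_sub_le [IsFiniteMeasure μ] {m : ℝ} (hm : IsMedian μ f m)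
    (hf : Measurable f) (hfint : Integrable f μ) {I : ℝ → ℝ}
    (hI : ConcaveOn ℝ (Icc 0 (μ univ).toReal) I) (hI0 : I 0 = 0)
    (hsym : ∀ t ∈ Icc 0 (μ univ).toReal, I ((μ univ).toReal - t) = I t) {G : ℝ} (hG : 0 ≤ G)
    (hcoarea : ∫⁻ s, ENNReal.ofReal (I (μ {x | s < f x}).toReal) ≤ ENNReal.ofReal G) :
    2 * I ((μ univ).toReal / 2) / (μ univ).toReal * ∫ x, |f x - m| ∂μ ≤ G := by
  set c := 2 * I ((μ univ).toReal / 2) / (μ univ).toReal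
  rcases le_or_gt c 0 with hc | hc
  · exact (mul_nonpos_of_nonpos_of_nonneg hc (integral_nonneg fun x => abs_nonneg _)).trans hG
  have hcompl : ∀ s : ℝ, {x | s < f x}ᶜ = {x | f x ≤ s} := fun s => by ext; simp
  rw [← ENNReal.ofReal_le_ofReal_iff hG, ENNReal.ofReal_mul hc.le,
    ofReal_integral_eq_lintegral_ofReal (f := fun x => |f x - m|)
      (hfint.sub (integrable_const m)).abs (.of_forall fun x => abs_nonneg _)]
  calc _ ≤ ENNReal.ofReal c * ∫⁻ s, min (μ {x | s < f x}) (μ {x | f x ≤ s}) :=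
        mul_le_mul_right (hm.lintegral_ofReal_abs_sub_le hf) _
    _ = ∫⁻ s, ENNReal.ofReal c * min (μ {x | s < f x}) (μ {x | f x ≤ s}) :=
        (lintegral_const_mul' _ _ ENNReal.ofReal_ne_top).symm
    _ ≤ ∫⁻ s, ENNReal.ofReal (I (μ {x | s < f x}).toReal) := lintegral_mono fun s => by
        simpa [hcompl] using hI.ofReal_mul_min_measure_compl_le hI0 hsym
          (measurableSet_lt measurable_const hf)
    _ ≤ _ := hcoarea

lemma integral_abs_sub_mean_le [IsFiniteMeasure μ] (hf : Integrable f μ) (a : ℝ) :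
    ∫ x, |f x - (∫ y, f y ∂μ) / (μ univ).toReal| ∂μ ≤ 2 * ∫ x, |f x - a| ∂μ := by
  set M := (μ univ).toReal
  set avg := (∫ y, f y ∂μ) / M
  have hfa : Integrable (fun x => |f x - a|) μ := (hf.sub (integrable_const a)).abs
  have hshift : M * |a - avg| ≤ ∫ x, |f x - a| ∂μ := by
    rcases eq_or_ne (μ univ) 0 with h | h
    · rw [show M = 0 by simp [M, h], zero_mul]
      exact integral_nonneg fun x => abs_nonneg _
    have hM : M ≠ 0 := ENNReal.toReal_ne_zero.2 ⟨h, measure_ne_top _ _⟩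
    calc M * |a - avg| = |M * (a - avg)| := by rw [abs_mul, abs_of_nonneg ENNReal.toReal_nonneg]
      _ = |∫ x, (f x - a) ∂μ| := by
          rw [integral_sub hf (integrable_const a), integral_const, smul_eq_mul, measureReal_def,
            abs_sub_comm, mul_sub, mul_div_cancel₀ _ hM, mul_comm]
      _ ≤ ∫ x, |f x - a| ∂μ := abs_integral_le_integral_abs
  calc ∫ x, |f x - avg| ∂μ ≤ ∫ x, (|f x - a| + |a - avg|) ∂μ :=
        integral_mono (hf.sub (integrable_const _)).abs (hfa.add (integrable_const _))
          fun x => abs_sub_le _ _ _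
    _ = ∫ x, |f x - a| ∂μ + M * |a - avg| := by
        rw [integral_add hfa (integrable_const _), integral_const, smul_eq_mul, measureReal_def]
    _ ≤ 2 * ∫ x, |f x - a| ∂μ := by linarith

end Levels

theorem mean_value_poincare_general {Ω : Type*} [MetricSpace Ω] [MeasurableSpace Ω] [BorelSpace Ω]
    (μ : Measure Ω) [IsFiniteMeasure μ]
    (I : ℝ → ℝ)
    (hIconc : ConcaveOn ℝ (Set.Icc 0 (μ Set.univ).toReal) I)
    (hI0 : I 0 = 0)
    (hIpos : ∀ t : ℝ, 0 < t → t < (μ Set.univ).toReal → 0 < I t)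
    (hIsym : ∀ t ∈ Set.Icc 0 (μ Set.univ).toReal, I ((μ Set.univ).toReal - t) = I t)
    (K : ℝ≥0) (f : Ω → ℝ) (hlip : LipschitzWith K f)
    (hfint : Integrable f μ)
    (hcoarea : ∫⁻ s : ℝ, ENNReal.ofReal (I ((μ {x | s < f x}).toReal)) ≤
      ENNReal.ofReal (∫ x, gradMod f x ∂μ)) :
    ∫ x, |f x - (∫ y, f y ∂μ) / (μ Set.univ).toReal| ∂μ ≤
      ((μ Set.univ).toReal / I ((μ Set.univ).toReal / 2)) * ∫ x, gradMod f x ∂μ := by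
  rcases eq_or_ne (μ univ) 0 with hμ | hμ
  · simp [Measure.measure_univ_eq_zero.mp hμ]
  set M := (μ univ).toReal
  have hM : 0 < M := ENNReal.toReal_pos hμ (measure_ne_top _ _)
  have hIhalf : 0 < I (M / 2) := hIpos _ (by linarith) (by linarith)
  have hc : 0 < 2 * I (M / 2) / M := by positivity
  have hf : Measurable f := hlip.continuous.measurable
  obtain ⟨m, hm⟩ := exists_isMedian (μ := μ) hf
  have hkey := hm.mul_integral_abs_sub_le hf hfint hIconc hI0 hIsym
    (integral_nonneg (gradMod_nonneg hlip)) hcoarea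
  calc _ ≤ 2 * ∫ x, |f x - m| ∂μ := integral_abs_sub_mean_le hfint m
    _ ≤ 2 * ((∫ x, gradMod f x ∂μ) / (2 * I (M / 2) / M)) := by gcongr; rwa [le_div_iff₀' hc]
    _ = _ := by field_simp

/-- **mean-value Poincaré inequality.** On a finite metric measure space whose
isoperimetric profile `I` is concave, continuous, zero at zero, positive on `(0, μ(Ω))`,
symmetric about `μ(Ω)/2` and increasing on `(0, μ(Ω)/2]`, every Lipschitz integrable `f`
with integrable modulus of gradient satisfying the co-area inequality obeys
`∫_Ω |f - (1/μ(Ω)) ∫_Ω f dμ| dμ ≤ (μ(Ω)/I(μ(Ω)/2)) ∫_Ω |∇f| dμ`. -/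
theorem mean_value_poincare {Ω : Type*} [MetricSpace Ω] [MeasurableSpace Ω] [BorelSpace Ω]
    (μ : Measure Ω) [IsFiniteMeasure μ] [IsFiniteMeasureOnCompacts μ]
    (I : ℝ → ℝ)
    (hIprof : ∀ t : ℝ, 0 ≤ t → ENNReal.ofReal t < μ Set.univ →
      ENNReal.ofReal (I t) = isoProfile μ (ENNReal.ofReal t))
    (hIconc : ConcaveOn ℝ (Set.Icc 0 (μ Set.univ).toReal) I)
    (hIcont : ContinuousOn I (Set.Icc 0 (μ Set.univ).toReal))
    (hI0 : I 0 = 0)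
    (hIpos : ∀ t : ℝ, 0 < t → t < (μ Set.univ).toReal → 0 < I t)
    (hIsym : ∀ t ∈ Set.Icc 0 (μ Set.univ).toReal, I ((μ Set.univ).toReal - t) = I t)
    (hImono : MonotoneOn I (Set.Ioc 0 ((μ Set.univ).toReal / 2)))
    (K : ℝ≥0) (f : Ω → ℝ) (hlip : LipschitzWith K f)
    (hfint : Integrable f μ) (hgint : Integrable (gradMod f) μ)
    (hcoarea : ∫⁻ s : ℝ, ENNReal.ofReal (I ((μ {x | s < f x}).toReal)) ≤
      ENNReal.ofReal (∫ x, gradMod f x ∂μ)) :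
    ∫ x, |f x - (∫ y, f y ∂μ) / (μ Set.univ).toReal| ∂μ ≤
      ((μ Set.univ).toReal / I ((μ Set.univ).toReal / 2)) * ∫ x, gradMod f x ∂μ :=
  mean_value_poincare_general μ I hIconc hI0 hIpos hIsym K f hlip hfint hcoarea
end

section
/- (Transference of uncertainty inequalities.) Let (Ω,d,μ) be a metric measure space with μ(Ω) = ∞ whose isoperimetric profile I₁ is concave, continuous, increasing, I₁(0) = 0, and strictly positive on (0,∞), and assume the co-area inequality ∫_0^{∞} I₁(μ{|g| > s}) ds ≤ ∫_Ω |∇g| dμ holds for every Lipschitz g with compact support. Let I₂ : [0,∞) → [0,∞) satisfy I₂(t) ≤ I₁(t) for all t, and let w : Ω → (0,∞) be measurable with C₂ := sup_{r>0} μ{w ≤ r}/(r·I₂(μ{w ≤ r})) < ∞ (with I₂ > 0 on (0,∞)). Then w is an isoperimetric weight for (Ω,d,μ) with constant at most C₂, and for every Lipschitz f with compact support with |∇f| and wf integrable, ∫_Ω |f| dμ ≤ 3·(2C₂)^{1/2}·(∫_Ω |∇f| dμ)^{1/2}·(∫_Ω w|f| dμ)^{1/2}. -/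
open MeasureTheory Filter Set Topology
open scoped ENNReal NNReal

/-! Split a superlevel set `X = {|f| > s}` along `{w ≤ r}`. Since `I₁` is concave with
`I₁ 0 = 0`, the weight inequality `μ{w ≤ r} ≤ C₂ r I₁(μ{w ≤ r})` persists for every smaller
measure, and by monotonicity the part of `X` where `w ≤ r` has measure at most `C₂ r I₁(μ X)`;
by Chebyshev the part where `w > r` has measure at most `ν X / r` for `ν = w μ`. Integrating
in `s` (layer cake) and using the co-area inequality gives
`∫ |f| ≤ C₂ r ∫ |∇f| + r⁻¹ ∫ w |f|` for all `r > 0`, and optimizing in `r` gives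
`∫ |f| ≤ 2 (C₂ ∫ |∇f| ∫ w |f|)^{1/2}`. -/

lemma Real.limsup_nonneg {α : Type*} {l : Filter α} {u : α → ℝ} (hu : ∀ a, 0 ≤ u a) :
    0 ≤ limsup u l := by
  rcases eq_or_neBot l with rfl | _
  · simp [limsup_eq]
  · exact Real.sInf_nonneg fun b hb => let ⟨a, ha⟩ := hb.exists; (hu a).trans ha

lemma ConcaveOn.le_const_mul_of_mem_Icc {I : ℝ → ℝ} {c m t : ℝ} (hI : ConcaveOn ℝ (Ici 0) I)
    (hI0 : 0 ≤ I 0) (hc : 0 ≤ c) (hm : m ≤ c * I m) (ht : t ∈ Icc 0 m) : t ≤ c * I t := by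
  have hg : ConcaveOn ℝ (Ici 0) (fun s => c * I s - s) :=
    (hI.smul hc).sub (convexOn_id (convex_Ici 0))
  have := hg.min_le_of_mem_Icc self_mem_Ici (ht.1.trans ht.2) ht
  have h0 : 0 ≤ c * I 0 - 0 := by simpa using mul_nonneg hc hI0
  linarith [le_min h0 (sub_nonneg.2 hm)]

lemma le_two_mul_sqrt_mul_of_forall_le_mul_add_div {x a b : ℝ} (ha : 0 ≤ a) (hb : 0 ≤ b)
    (h : ∀ r > 0, x ≤ a * r + b / r) : x ≤ 2 * √(a * b) := by
  -- Perturbing `a` and `b` makes the optimal `r = √((b + ε) / (a + ε))` positive.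
  have hε : ∀ ε > 0, x ≤ 2 * √((a + ε) * (b + ε)) := by
    intro ε hε
    have hp : 0 < √(a + ε) := Real.sqrt_pos.2 (by linarith)
    have hq : 0 < √(b + ε) := Real.sqrt_pos.2 (by linarith)
    calc x ≤ a * (√(b + ε) / √(a + ε)) + b / (√(b + ε) / √(a + ε)) := h _ (by positivity)
      _ ≤ (a + ε) * (√(b + ε) / √(a + ε)) + (b + ε) / (√(b + ε) / √(a + ε)) := by
        gcongr <;> linarith
      _ = 2 * √((a + ε) * (b + ε)) := by
        rw [Real.sqrt_mul (by linarith)]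
        field_simp
        rw [Real.sq_sqrt (by linarith), Real.sq_sqrt (by linarith)]
        ring
  have hcont : Tendsto (fun ε => 2 * √((a + ε) * (b + ε))) (𝓝[>] 0) (𝓝 (2 * √(a * b))) := by
    have : Continuous (fun ε : ℝ => 2 * √((a + ε) * (b + ε))) := by fun_prop
    simpa using (this.tendsto 0).mono_left nhdsWithin_le_nhds
  exact ge_of_tendsto hcont (eventually_nhdsWithin_of_forall hε)

section IsoperimetricWeight

variable {Ω : Type*} [MeasurableSpace Ω] {μ : Measure Ω} {I : ℝ → ℝ} {w : Ω → ℝ} {c r : ℝ}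

lemma HasCompactSupport.measure_lt_abs_ne_top [TopologicalSpace Ω] [IsFiniteMeasureOnCompacts μ]
    {f : Ω → ℝ} (hf : HasCompactSupport f) {s : ℝ} (hs : 0 ≤ s) : μ {x | s < |f x|} ≠ ∞ :=
  ne_top_of_le_ne_top hf.measure_lt_top.ne <| measure_mono fun x hx =>
    subset_tsupport f fun h => hs.not_gt (by simpa [h] using hx)

lemma measure_inter_le_ofReal_mul_of_concaveOn (hI : ConcaveOn ℝ (Ici 0) I) (hI0 : 0 ≤ I 0)
    (hImono : MonotoneOn I (Ici 0)) (hc : 0 ≤ c) {S X : Set Ω}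
    (hS : μ S ≤ ENNReal.ofReal (c * I (μ S).toReal)) (hX : μ X ≠ ∞) :
    μ (X ∩ S) ≤ ENNReal.ofReal (c * I (μ X).toReal) := by
  have hSfin : μ S ≠ ∞ := ne_top_of_le_ne_top ENNReal.ofReal_ne_top hS
  rcases le_total (μ S) (μ X) with hSX | hXS
  · calc μ (X ∩ S) ≤ μ S := measure_mono inter_subset_right
      _ ≤ _ := hS
      _ ≤ _ := by
        gcongr
        exact hImono ENNReal.toReal_nonneg ENNReal.toReal_nonneg
          ((ENNReal.toReal_le_toReal hSfin hX).2 hSX)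
  · have hInn : 0 ≤ I (μ S).toReal :=
      hI0.trans (hImono self_mem_Ici ENNReal.toReal_nonneg ENNReal.toReal_nonneg)
    have key := hI.le_const_mul_of_mem_Icc hI0 hc
      (ENNReal.toReal_le_of_le_ofReal (by positivity) hS)
      ⟨ENNReal.toReal_nonneg, (ENNReal.toReal_le_toReal hX hSfin).2 hXS⟩
    calc μ (X ∩ S) ≤ μ X := measure_mono inter_subset_left
      _ = ENNReal.ofReal (μ X).toReal := (ENNReal.ofReal_toReal hX).symm
      _ ≤ _ := ENNReal.ofReal_le_ofReal key

lemma measure_sdiff_le_withDensity_div (hw : Measurable w) (hr : 0 < r) {X : Set Ω}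
    (hX : MeasurableSet X) :
    μ (X \ {x | w x ≤ r}) ≤ μ.withDensity (fun x => ENNReal.ofReal (w x)) X / ENNReal.ofReal r := by
  rw [ENNReal.le_div_iff_mul_le (Or.inl (by simpa using hr)) (Or.inl ENNReal.ofReal_ne_top),
    mul_comm, withDensity_apply _ hX]
  calc ENNReal.ofReal r * μ (X \ {x | w x ≤ r})
      ≤ ENNReal.ofReal r * μ.restrict X {x | ENNReal.ofReal r ≤ ENNReal.ofReal (w x)} := by
        refine mul_le_mul_right ((measure_mono ?_).trans (Measure.le_restrict_apply _ _)) _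
        rintro x ⟨hxX, hxw⟩
        exact ⟨ENNReal.ofReal_le_ofReal (not_le.1 hxw).le, hxX⟩
    _ ≤ _ := mul_meas_ge_le_lintegral₀ hw.ennreal_ofReal.aemeasurable _

lemma measure_le_of_measure_sublevel_le (hI : ConcaveOn ℝ (Ici 0) I) (hI0 : 0 ≤ I 0)
    (hImono : MonotoneOn I (Ici 0)) (hw : Measurable w) (hc : 0 ≤ c) (hr : 0 < r)
    (hwr : μ {x | w x ≤ r} ≤ ENNReal.ofReal (c * I (μ {x | w x ≤ r}).toReal))
    {X : Set Ω} (hX : MeasurableSet X) (hXfin : μ X ≠ ∞) :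
    μ X ≤ ENNReal.ofReal c * ENNReal.ofReal (I (μ X).toReal) +
      μ.withDensity (fun x => ENNReal.ofReal (w x)) X / ENNReal.ofReal r := by
  rw [← ENNReal.ofReal_mul hc]
  exact (measure_le_inter_add_sdiff μ X _).trans <| add_le_add
    (measure_inter_le_ofReal_mul_of_concaveOn hI hI0 hImono hc hwr hXfin)
    (measure_sdiff_le_withDensity_div hw hr hX)

lemma lintegral_abs_le_of_measure_sublevel_le (hI : ConcaveOn ℝ (Ici 0) I) (hI0 : 0 ≤ I 0)
    (hImono : MonotoneOn I (Ici 0)) (hw : Measurable w) (hc : 0 ≤ c) (hr : 0 < r)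
    (hwr : μ {x | w x ≤ r} ≤ ENNReal.ofReal (c * I (μ {x | w x ≤ r}).toReal))
    {f : Ω → ℝ} (hf : Measurable f) (hfin : ∀ s > 0, μ {x | s < |f x|} ≠ ∞) :
    ∫⁻ x, ENNReal.ofReal |f x| ∂μ ≤
      ENNReal.ofReal c * (∫⁻ s in Ioi 0, ENNReal.ofReal (I (μ {x | s < |f x|}).toReal)) +
        (∫⁻ x, ENNReal.ofReal (w x) * ENNReal.ofReal |f x| ∂μ) / ENNReal.ofReal r := by
  set ν := μ.withDensity fun x => ENNReal.ofReal (w x)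
  have hν : ∫⁻ x, ENNReal.ofReal (w x) * ENNReal.ofReal |f x| ∂μ =
      ∫⁻ s in Ioi 0, ν {x | s < |f x|} := by
    rw [← lintegral_eq_lintegral_meas_lt ν (ae_of_all _ fun x => abs_nonneg _) hf.abs.aemeasurable,
      lintegral_withDensity_eq_lintegral_mul μ hw.ennreal_ofReal hf.abs.ennreal_ofReal]
    rfl
  have hν_meas : Measurable fun s : ℝ => ν {x | s < |f x|} :=
    Antitone.measurable fun a b hab => measure_mono fun x hx => hab.trans_lt hx
  rw [lintegral_eq_lintegral_meas_lt μ (ae_of_all _ fun x => abs_nonneg _) hf.abs.aemeasurable,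
    hν, ← lintegral_const_mul' _ _ ENNReal.ofReal_ne_top, ENNReal.div_eq_inv_mul,
    ← lintegral_const_mul _ hν_meas, ← lintegral_add_right _ (hν_meas.const_mul _)]
  refine lintegral_mono_ae <| (ae_restrict_iff' measurableSet_Ioi).2 <| ae_of_all _ fun s hs => ?_
  rw [← ENNReal.div_eq_inv_mul]
  exact measure_le_of_measure_sublevel_le hI hI0 hImono hw hc hr hwr
    (measurableSet_lt measurable_const hf.abs) (hfin s hs)

lemma integral_abs_le_of_measure_sublevel_le [TopologicalSpace Ω] [OpensMeasurableSpace Ω]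
    [IsFiniteMeasureOnCompacts μ] (hI : ConcaveOn ℝ (Ici 0) I) (hI0 : 0 ≤ I 0)
    (hImono : MonotoneOn I (Ici 0)) (hw : Measurable w) (hw_nonneg : ∀ x, 0 ≤ w x) (hc : 0 ≤ c)
    (hr : 0 < r) (hwr : μ {x | w x ≤ r} ≤ ENNReal.ofReal (c * I (μ {x | w x ≤ r}).toReal))
    {f : Ω → ℝ} (hf : Continuous f) (hfs : HasCompactSupport f)
    (hwf : Integrable (fun x => w x * f x) μ) {A : ℝ} (hA : 0 ≤ A)
    (hcoarea : ∫⁻ s in Ioi 0, ENNReal.ofReal (I (μ {x | s < |f x|}).toReal) ≤ ENNReal.ofReal A) :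
    ∫ x, |f x| ∂μ ≤ c * A + (∫ x, w x * |f x| ∂μ) / r := by
  have hwf_nonneg : ∀ x, 0 ≤ w x * |f x| := fun x => mul_nonneg (hw_nonneg x) (abs_nonneg _)
  have hB : ∫⁻ x, ENNReal.ofReal (w x) * ENNReal.ofReal |f x| ∂μ =
      ENNReal.ofReal (∫ x, w x * |f x| ∂μ) := by
    rw [ofReal_integral_eq_lintegral_ofReal
      (hwf.abs.congr (ae_of_all _ fun x => by simp [abs_mul, abs_of_nonneg (hw_nonneg x)]))
      (ae_of_all _ hwf_nonneg)]
    simp only [ENNReal.ofReal_mul (hw_nonneg _)]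
  have hB_nonneg : 0 ≤ ∫ x, w x * |f x| ∂μ := integral_nonneg hwf_nonneg
  rw [integral_eq_lintegral_of_nonneg_ae (ae_of_all _ fun x => abs_nonneg _)
    hf.abs.aestronglyMeasurable]
  refine ENNReal.toReal_le_of_le_ofReal (by positivity) ?_
  calc ∫⁻ x, ENNReal.ofReal |f x| ∂μ
      ≤ ENNReal.ofReal c * (∫⁻ s in Ioi 0, ENNReal.ofReal (I (μ {x | s < |f x|}).toReal)) +
          (∫⁻ x, ENNReal.ofReal (w x) * ENNReal.ofReal |f x| ∂μ) / ENNReal.ofReal r :=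
        lintegral_abs_le_of_measure_sublevel_le hI hI0 hImono hw hc hr hwr hf.measurable
          fun s hs => hfs.measure_lt_abs_ne_top hs.le
    _ ≤ ENNReal.ofReal c * ENNReal.ofReal A +
          ENNReal.ofReal (∫ x, w x * |f x| ∂μ) / ENNReal.ofReal r := by
        rw [hB]; gcongr
    _ = ENNReal.ofReal (c * A + (∫ x, w x * |f x| ∂μ) / r) := by
        rw [← ENNReal.ofReal_mul hc, ← ENNReal.ofReal_div_of_pos hr,
          ← ENNReal.ofReal_add (by positivity) (by positivity)]

end IsoperimetricWeight

theorem transference_uncertainty_general {Ω : Type*} [MetricSpace Ω] [MeasurableSpace Ω]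
    [BorelSpace Ω] (μ : Measure Ω) [IsFiniteMeasureOnCompacts μ]
    (I₁ : ℝ → ℝ)
    (hIconc : ConcaveOn ℝ (Set.Ici 0) I₁)
    (hImono : MonotoneOn I₁ (Set.Ici 0))
    (hI0 : I₁ 0 = 0)
    (hcoarea : ∀ (K : ℝ≥0) (g : Ω → ℝ), LipschitzWith K g → HasCompactSupport g →
      ∫⁻ s in Set.Ioi (0:ℝ), ENNReal.ofReal (I₁ ((μ {x | s < |g x|}).toReal)) ≤
        ENNReal.ofReal (∫ x, gradMod g x ∂μ))
    (I₂ : ℝ → ℝ)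
    (hI₂le : ∀ t : ℝ, 0 ≤ t → I₂ t ≤ I₁ t)
    (w : Ω → ℝ) (hw_meas : Measurable w) (hw_pos : ∀ x, 0 < w x)
    (C₂ : ℝ) (hC₂ : 0 < C₂)
    (hw₂ : ∀ r : ℝ, 0 < r →
      μ {x | w x ≤ r} ≤ ENNReal.ofReal (C₂ * r * I₂ ((μ {x | w x ≤ r}).toReal))) :
    (∀ r : ℝ, 0 < r →
      μ {x | w x ≤ r} ≤ ENNReal.ofReal (C₂ * r * I₁ ((μ {x | w x ≤ r}).toReal))) ∧
    ∀ (K : ℝ≥0) (f : Ω → ℝ), LipschitzWith K f → HasCompactSupport f →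
      Integrable (gradMod f) μ → Integrable (fun x => w x * f x) μ →
      ∫ x, |f x| ∂μ ≤
        3 * (2 * C₂) ^ ((1:ℝ)/2) * (∫ x, gradMod f x ∂μ) ^ ((1:ℝ)/2) *
          (∫ x, w x * |f x| ∂μ) ^ ((1:ℝ)/2) := by
  have hweight : ∀ r : ℝ, 0 < r →
      μ {x | w x ≤ r} ≤ ENNReal.ofReal (C₂ * r * I₁ ((μ {x | w x ≤ r}).toReal)) :=
    fun r hr => (hw₂ r hr).trans <| ENNReal.ofReal_le_ofReal <| by
      gcongr; exact hI₂le _ ENNReal.toReal_nonneg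
  refine ⟨hweight, fun K f hf hfs _ hwf => ?_⟩
  set A := ∫ x, gradMod f x ∂μ
  set B := ∫ x, w x * |f x| ∂μ
  have hA : 0 ≤ A := integral_nonneg fun x => Real.limsup_nonneg fun y => by positivity
  have hB : 0 ≤ B := integral_nonneg fun x => mul_nonneg (hw_pos x).le (abs_nonneg _)
  have hbound : ∀ r > 0, ∫ x, |f x| ∂μ ≤ C₂ * A * r + B / r := fun r hr => by
    have := integral_abs_le_of_measure_sublevel_le hIconc hI0.ge hImono hw_meas
      (fun x => (hw_pos x).le) (by positivity) hr (hweight r hr) hf.continuous hfs hwf hA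
      (hcoarea K f hf hfs)
    linarith
  calc ∫ x, |f x| ∂μ ≤ 2 * √(C₂ * A * B) :=
        le_two_mul_sqrt_mul_of_forall_le_mul_add_div (by positivity) hB hbound
    _ ≤ 3 * √2 * √(C₂ * A * B) := by
        have : 1 ≤ √2 := Real.one_le_sqrt.2 (by norm_num)
        nlinarith [Real.sqrt_nonneg (C₂ * A * B)]
    _ = 3 * (2 * C₂) ^ ((1:ℝ)/2) * A ^ ((1:ℝ)/2) * B ^ ((1:ℝ)/2) := by
        simp only [← Real.sqrt_eq_rpow, Real.sqrt_mul zero_le_two, Real.sqrt_mul hC₂.le,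
          Real.sqrt_mul (mul_nonneg hC₂.le hA)]
        ring

/-- **transference of uncertainty inequalities.**
Let `(Ω,d,μ)` have infinite measure, isoperimetric profile `I₁` (concave, continuous,
increasing, zero at zero, positive on `(0,∞)`) and satisfy the co-area inequality for
every compactly supported Lipschitz function. If `I₂ ≤ I₁` and `w` satisfies
`μ{w ≤ r} ≤ C₂ r I₂(μ{w ≤ r})` for all `r > 0`, then `w` is an isoperimetric weight for
`(Ω,d,μ)` with constant at most `C₂`, and for every compactly supported Lipschitz `f`
with `|∇f|` and `w f` integrable,
`∫ |f| dμ ≤ 3 (2C₂)^{1/2} (∫ |∇f| dμ)^{1/2} (∫ w |f| dμ)^{1/2}`. -/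
theorem transference_uncertainty {Ω : Type*} [MetricSpace Ω] [MeasurableSpace Ω]
    [BorelSpace Ω] (μ : Measure Ω) [IsFiniteMeasureOnCompacts μ]
    (hμ : μ Set.univ = ⊤)
    (I₁ : ℝ → ℝ)
    (hIprof : ∀ t : ℝ, 0 ≤ t →
      ENNReal.ofReal (I₁ t) = isoProfile μ (ENNReal.ofReal t))
    (hIconc : ConcaveOn ℝ (Set.Ici 0) I₁)
    (hIcont : ContinuousOn I₁ (Set.Ici 0))
    (hImono : MonotoneOn I₁ (Set.Ici 0))
    (hI0 : I₁ 0 = 0)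
    (hIpos : ∀ t : ℝ, 0 < t → 0 < I₁ t)
    (hcoarea : ∀ (K : ℝ≥0) (g : Ω → ℝ), LipschitzWith K g → HasCompactSupport g →
      ∫⁻ s in Set.Ioi (0:ℝ), ENNReal.ofReal (I₁ ((μ {x | s < |g x|}).toReal)) ≤
        ENNReal.ofReal (∫ x, gradMod g x ∂μ))
    (I₂ : ℝ → ℝ)
    (hI₂le : ∀ t : ℝ, 0 ≤ t → I₂ t ≤ I₁ t)
    (hI₂pos : ∀ t : ℝ, 0 < t → 0 < I₂ t)
    (w : Ω → ℝ) (hw_meas : Measurable w) (hw_pos : ∀ x, 0 < w x)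
    (C₂ : ℝ) (hC₂ : 0 < C₂)
    (hw₂ : ∀ r : ℝ, 0 < r →
      μ {x | w x ≤ r} ≤ ENNReal.ofReal (C₂ * r * I₂ ((μ {x | w x ≤ r}).toReal))) :
    (∀ r : ℝ, 0 < r →
      μ {x | w x ≤ r} ≤ ENNReal.ofReal (C₂ * r * I₁ ((μ {x | w x ≤ r}).toReal))) ∧
    ∀ (K : ℝ≥0) (f : Ω → ℝ), LipschitzWith K f → HasCompactSupport f →
      Integrable (gradMod f) μ → Integrable (fun x => w x * f x) μ →
      ∫ x, |f x| ∂μ ≤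
        3 * (2 * C₂) ^ ((1:ℝ)/2) * (∫ x, gradMod f x ∂μ) ^ ((1:ℝ)/2) *
          (∫ x, w x * |f x| ∂μ) ^ ((1:ℝ)/2) :=
  transference_uncertainty_general μ I₁ hIconc hImono hI0 hcoarea I₂ hI₂le w hw_meas hw_pos C₂ hC₂
    hw₂
end
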